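/- arXiv:2008.08575 — 2 statements merged into one kernel-verified Lean document; each statement's English description precedes it below -/
import Mathlib

section
/- Let G be a graph with edge connectivity λ and minimum degree δ, and let G' be obtained from G by contracting each part of a partition such that every non-trivial minimum cut of G is preserved (i.e., for every non-trivial minimum cut (C,V\C), each contracted part lies entirely in C or entirely in V\C). Let λ' be the edge connectivity of G'. Then min{λ', δ} = λ. -/
open Finset

variable {V : Type*} [Fintype V] [DecidableEq V]

/-- Number of ordered adjacencies from `A` to `B`; for disjoint `A B` this is `|E(A,B)|`. -/
def eBtw (G : SimpleGraph V) [DecidableRel G.Adj] (A B : Finset V) : ℕ :=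
  ∑ a ∈ A, (B.filter (G.Adj a)).card

/-- `|E(v,S)|`: number of edges from `v` to `S`. -/
def eV (G : SimpleGraph V) [DecidableRel G.Adj] (v : V) (S : Finset V) : ℕ :=
  (S.filter (G.Adj v)).card

/-- Volume `vol_G(S)`. -/
def vol (G : SimpleGraph V) [DecidableRel G.Adj] (S : Finset V) : ℕ :=
  ∑ v ∈ S, G.degree v

/-- Value of the cut `(C, V \ C)`. -/
def cutVal (G : SimpleGraph V) [DecidableRel G.Adj] (C : Finset V) : ℕ :=
  eBtw G C Cᶜ

/-- `(C, V \ C)` is a minimum cut. -/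
def IsMinCut (G : SimpleGraph V) [DecidableRel G.Adj] (C : Finset V) : Prop :=
  C.Nonempty ∧ Cᶜ.Nonempty ∧
    ∀ D : Finset V, D.Nonempty → Dᶜ.Nonempty → cutVal G C ≤ cutVal G D

/-- `|E(A,A)|`: number of edges with both endpoints in `A`. -/
def inEdges (G : SimpleGraph V) [DecidableRel G.Adj] (A : Finset V) : ℕ :=
  (G.edgeFinset.filter (fun e => ∀ v ∈ e, v ∈ A)).card

/-!
If `λ = δ` there is nothing to show, since `λ ≤ λ'` and `λ ≤ δ` always hold. If `λ < δ`, no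
minimum cut can be trivial, because a side `{v}` has value `deg v ≥ δ`. Hence any minimum cut is
preserved by the contraction: it is the union of the parts on one of its sides, so it is also a cut
of the contracted graph, and `λ' ≤ λ`.
-/

section Cut

variable (G : SimpleGraph V) [DecidableRel G.Adj]

lemma eBtw_comm (A B : Finset V) : eBtw G A B = eBtw G B A := by
  simp only [eBtw, card_filter]
  rw [sum_comm]
  simp only [G.adj_comm]

lemma cutVal_compl (C : Finset V) : cutVal G Cᶜ = cutVal G C := by
  rw [cutVal, cutVal, compl_compl, eBtw_comm]

lemma cutVal_singleton (v : V) : cutVal G {v} = G.degree v := by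
  rw [cutVal, eBtw, sum_singleton, ← G.card_neighborFinset_eq_degree]
  congr 1
  ext w
  simpa using fun h : G.Adj v w => h.ne'

lemma le_minDegree_of_forall_le_cutVal [Nontrivial V] {k : ℕ}
    (hk : ∀ C : Finset V, C.Nonempty → Cᶜ.Nonempty → k ≤ cutVal G C) : k ≤ G.minDegree := by
  obtain ⟨v, hv⟩ := G.exists_minimal_degree_vertex
  obtain ⟨w, hw⟩ := exists_ne v
  rw [hv, ← cutVal_singleton]
  exact hk {v} (singleton_nonempty v) ⟨w, by simpa using hw⟩

lemma two_le_card_of_cutVal_lt_minDegree {C : Finset V} (hC : C.Nonempty)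
    (hlt : cutVal G C < G.minDegree) : 2 ≤ C.card := by
  by_contra! hcard
  have hone : C.card = 1 := by have := hC.card_pos; omega
  obtain ⟨v, rfl⟩ := card_eq_one.mp hone
  rw [cutVal_singleton] at hlt
  exact (G.minDegree_le_degree v).not_gt hlt

end Cut

lemma nontrivial_of_nonempty_of_compl_nonempty {C : Finset V} (hC : C.Nonempty)
    (hCc : Cᶜ.Nonempty) : Nontrivial V := by
  obtain ⟨a, ha⟩ := hC
  obtain ⟨b, hb⟩ := hCc
  exact nontrivial_of_ne a b (by rintro rfl; exact mem_compl.mp hb ha)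

lemma Finpartition.sup_filter_subset_eq {P : Finpartition (univ : Finset V)} {C : Finset V}
    (hP : ∀ X ∈ P.parts, X ⊆ C ∨ X ⊆ Cᶜ) : (P.parts.filter (· ⊆ C)).sup id = C := by
  refine (Finset.sup_le fun X hX => (mem_filter.mp hX).2).antisymm fun x hx => ?_
  obtain ⟨X, hXP, hxX⟩ := P.exists_mem (mem_univ x)
  have hXC : X ⊆ C := (hP X hXP).resolve_right fun h => mem_compl.mp (h hxX) hx
  exact mem_sup.mpr ⟨X, mem_filter.mpr ⟨hXP, hXC⟩, hxX⟩

theorem stmt8_general (G : SimpleGraph V) [DecidableRel G.Adj]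
    (P : Finpartition (Finset.univ : Finset V))
    (δ : ℕ) (hδ : δ = G.minDegree)
    (lam : ℕ)
    (hlam_lb : ∀ C : Finset V, C.Nonempty → Cᶜ.Nonempty → lam ≤ cutVal G C)
    (hlam_ach : ∃ C : Finset V, C.Nonempty ∧ Cᶜ.Nonempty ∧ cutVal G C = lam)
    (hpres : ∀ C : Finset V, IsMinCut G C → 2 ≤ C.card → 2 ≤ Cᶜ.card →
      ∀ X ∈ P.parts, X ⊆ C ∨ X ⊆ Cᶜ)
    (lam' : ℕ)
    (hlam'_lb : ∀ S : Finset (Finset V), S ⊆ P.parts → (S.sup id).Nonempty →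
      ((S.sup id)ᶜ).Nonempty → lam' ≤ cutVal G (S.sup id))
    (hlam'_ach : ∃ S : Finset (Finset V), S ⊆ P.parts ∧ (S.sup id).Nonempty ∧
      ((S.sup id)ᶜ).Nonempty ∧ cutVal G (S.sup id) = lam') :
    min lam' δ = lam := by
  obtain ⟨C, hC, hCc, hCval⟩ := hlam_ach
  obtain ⟨S, -, hS, hSc, hSval⟩ := hlam'_ach
  have := nontrivial_of_nonempty_of_compl_nonempty hC hCc
  have hlam_le' : lam ≤ lam' := hSval ▸ hlam_lb _ hS hSc
  have hlam_le_δ : lam ≤ δ := hδ ▸ le_minDegree_of_forall_le_cutVal G hlam_lb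
  obtain hlam_eq | hlam_lt := hlam_le_δ.eq_or_lt
  · omega
  have hmin : IsMinCut G C := ⟨hC, hCc, fun D hD hDc => hCval ▸ hlam_lb D hD hDc⟩
  have hparts := hpres C hmin
    (two_le_card_of_cutVal_lt_minDegree G hC (by omega))
    (two_le_card_of_cutVal_lt_minDegree G hCc (by rw [cutVal_compl]; omega))
  have hsup := Finpartition.sup_filter_subset_eq hparts
  have hlam'_le : lam' ≤ lam := by
    have := hlam'_lb _ (filter_subset _ _) (by rwa [hsup]) (by rwa [hsup])
    rwa [hsup, hCval] at this
  omega

theorem stmt8 (G : SimpleGraph V) [DecidableRel G.Adj] (hG : G.Connected)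
    (hV : 2 ≤ Fintype.card V)
    (P : Finpartition (Finset.univ : Finset V))
    (δ : ℕ) (hδ : δ = G.minDegree)
    (lam : ℕ)
    (hlam_lb : ∀ C : Finset V, C.Nonempty → Cᶜ.Nonempty → lam ≤ cutVal G C)
    (hlam_ach : ∃ C : Finset V, C.Nonempty ∧ Cᶜ.Nonempty ∧ cutVal G C = lam)
    (hpres : ∀ C : Finset V, IsMinCut G C → 2 ≤ C.card → 2 ≤ Cᶜ.card →
      ∀ X ∈ P.parts, X ⊆ C ∨ X ⊆ Cᶜ)
    (lam' : ℕ)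
    (hlam'_lb : ∀ S : Finset (Finset V), S ⊆ P.parts → (S.sup id).Nonempty →
      ((S.sup id)ᶜ).Nonempty → lam' ≤ cutVal G (S.sup id))
    (hlam'_ach : ∃ S : Finset (Finset V), S ⊆ P.parts ∧ (S.sup id).Nonempty ∧
      ((S.sup id)ᶜ).Nonempty ∧ cutVal G (S.sup id) = lam') :
    min lam' δ = lam :=
  stmt8_general G P δ hδ lam hlam_lb hlam_ach hpres lam' hlam'_lb hlam'_ach
end

section
/- Let G be a simple graph with minimum degree δ and suppose all minimum cuts of G are non-trivial, with edge connectivity λ < δ. Let S ⊆ V satisfy: every v ∈ S has |E(v,S)| ≥ 2deg(v)/5, and for some minimum cut (C, V\C), |S∩C| ≤ λ/40 and |S∩C| ≤ |S\C|. Then |S∩C| ≥ 3 leads to a contradiction; specifically, δ ≥ (2/5)δ·|S∩C| − 2|S∩C|² and |S∩C| ≤ λ/40 < δ/30 jointly imply |S∩C| ≤ 2. -/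
open Finset

variable {V : Type*} [Fintype V] [DecidableEq V]

/-!
Write `A = S ∩ C` and `k = |A|`. Counting the adjacencies from `A` into `S`, those landing in `A`
number at most `k²` and those landing in `S \ C` cross the minimum cut, so there are at most
`k² + λ` of them; the degree condition on `S` gives at least `(2/5)δk`. Hence `2δk ≤ 5k² + 5λ`,
so `(2k - 5)δ < 5k²`; with `40k ≤ λ < δ` this forces `15k < 40` once `k ≥ 3`.
-/

section Counting

variable {W : Type*} (G : SimpleGraph W) [DecidableRel G.Adj]

lemma eBtw_union_right [DecidableEq W] {A B B' : Finset W} (h : Disjoint B B') :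
    eBtw G A (B ∪ B') = eBtw G A B + eBtw G A B' := by
  unfold eBtw
  rw [← sum_add_distrib]
  refine sum_congr rfl fun a _ => ?_
  rw [filter_union, card_union_of_disjoint (disjoint_filter_filter h)]

lemma eBtw_mono {A A' B B' : Finset W} (hA : A ⊆ A') (hB : B ⊆ B') :
    eBtw G A B ≤ eBtw G A' B' :=
  calc eBtw G A B ≤ ∑ a ∈ A, (B'.filter (G.Adj a)).card :=
        sum_le_sum fun _ _ => card_le_card (filter_subset_filter _ hB)
    _ ≤ eBtw G A' B' := sum_le_sum_of_subset hA

lemma eBtw_self_le (A : Finset W) : eBtw G A A ≤ #A * #A :=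
  calc eBtw G A A ≤ ∑ _a ∈ A, #A := sum_le_sum fun _ _ => card_le_card (filter_subset _ _)
    _ = #A * #A := by rw [sum_const, smul_eq_mul]

lemma eBtw_inter_sdiff_le_cutVal [Fintype W] [DecidableEq W] (S C : Finset W) :
    eBtw G (S ∩ C) (S \ C) ≤ cutVal G C :=
  eBtw_mono G inter_subset_right fun _ hx => mem_compl.2 (mem_sdiff.1 hx).2

lemma eBtw_inter_le [Fintype W] [DecidableEq W] (S C : Finset W) :
    eBtw G (S ∩ C) S ≤ #(S ∩ C) * #(S ∩ C) + cutVal G C :=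
  calc eBtw G (S ∩ C) S = eBtw G (S ∩ C) (S ∩ C) + eBtw G (S ∩ C) (S \ C) := by
        rw [← eBtw_union_right G (disjoint_sdiff_inter S C).symm, union_comm, sdiff_union_inter]
    _ ≤ #(S ∩ C) * #(S ∩ C) + cutVal G C :=
        add_le_add (eBtw_self_le G _) (eBtw_inter_sdiff_le_cutVal G S C)

lemma mul_minDegree_mul_card_le_eBtw [Fintype W] {a b : ℕ} {A B : Finset W}
    (h : ∀ v ∈ A, a * G.degree v ≤ b * eV G v B) : a * G.minDegree * #A ≤ b * eBtw G A B :=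
  calc a * G.minDegree * #A = ∑ _v ∈ A, a * G.minDegree := by rw [sum_const, smul_eq_mul, mul_comm]
    _ ≤ ∑ v ∈ A, b * eV G v B :=
        sum_le_sum fun v hv => (Nat.mul_le_mul_left a (G.minDegree_le_degree v)).trans (h v hv)
    _ = b * eBtw G A B := by rw [← mul_sum]; rfl

end Counting

theorem stmt10_general (G : SimpleGraph V) [DecidableRel G.Adj]
    (δ : ℕ) (hδ : δ = G.minDegree)
    (C : Finset V)
    (lam : ℕ) (hlam : lam = cutVal G C) (hlamδ : lam < δ)
    (S : Finset V)
    (hS : ∀ v ∈ S, 2 * (G.degree v : ℝ) / 5 ≤ (eV G v S : ℝ))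
    (hsmall : ((S ∩ C).card : ℝ) ≤ (lam : ℝ) / 40) :
    (S ∩ C).card ≤ 2 := by
  have hdense : ∀ v ∈ S ∩ C, 2 * G.degree v ≤ 5 * eV G v S := fun v hv => by
    have := hS v (mem_of_mem_inter_left hv)
    exact_mod_cast (by linarith : (2 * G.degree v : ℝ) ≤ 5 * eV G v S)
  have hlower := mul_minDegree_mul_card_le_eBtw G hdense
  have hupper := eBtw_inter_le G S C
  have hk : 40 * #(S ∩ C) ≤ lam := by
    exact_mod_cast (by linarith : (40 * #(S ∩ C) : ℝ) ≤ lam)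
  subst hδ hlam
  nlinarith

theorem stmt10 (G : SimpleGraph V) [DecidableRel G.Adj]
    (δ : ℕ) (hδ : δ = G.minDegree)
    (hnontriv : ∀ D : Finset V, IsMinCut G D → 2 ≤ D.card ∧ 2 ≤ Dᶜ.card)
    (C : Finset V) (hC : IsMinCut G C)
    (lam : ℕ) (hlam : lam = cutVal G C) (hlamδ : lam < δ)
    (S : Finset V)
    (hS : ∀ v ∈ S, 2 * (G.degree v : ℝ) / 5 ≤ (eV G v S : ℝ))
    (hsmall : ((S ∩ C).card : ℝ) ≤ (lam : ℝ) / 40)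
    (hside : (S ∩ C).card ≤ (S \ C).card) :
    (S ∩ C).card ≤ 2 :=
  stmt10_general G δ hδ C lam hlam hlamδ S hS hsmall
end
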